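/- arXiv:2305.03377 — 2 statements merged into one kernel-verified Lean document; each statement's English description precedes it below -/
import Mathlib

section
/- Let ε > 0. Then there is no infinite pair of multiplicative complements (A,B) ∈ MC₂ with B(x) = o(x) such that A(x) = O( x / ( (log x) (log log x)^{1+ε} ) ). -/
open Filter

/-- Counting function: number of elements of `A` that are at most `x`. -/
noncomputable def cnt (A : Set ℕ) (x : ℕ) : ℕ := {a ∈ A | a ≤ x}.ncard

/-- `(A, B)` are multiplicative complements of order 2: both are sets of positive
integers and every positive integer is a product `a * b` with `a ∈ A`, `b ∈ B`. -/
def MC2 (A B : Set ℕ) : Prop :=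
  A ⊆ {n | 0 < n} ∧ B ⊆ {n | 0 < n} ∧
    ∀ n : ℕ, 0 < n → ∃ a ∈ A, ∃ b ∈ B, n = a * b

/-!
The density hypothesis on `A` makes `∑_{a ∈ A} 1/a` converge: by partial summation it is
dominated by `∑ A(t)/t² ≪ ∑ 1/(t log t (log log t)^{1+ε})`, which converges by the integral test
with antiderivative `-(log log t)^{-ε}/ε`. On the other hand, covering `[1, x]` by the sets
`a · (B ∩ [1, x/a])` gives `1 ≤ ∑_{a ∈ A} B(x/a)/x`. Each summand is at most `1/a` and tends
to `0` because `B(x) = o(x)`, so by dominated convergence the right side tends to `0`.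
-/

namespace Real

theorem one_lt_log_of_three_le {x : ℝ} (hx : 3 ≤ x) : 1 < log x := by
  rw [← exp_lt_exp, exp_log (by linarith)]
  linarith [exp_one_lt_d9]

theorem hasDerivAt_log_log_rpow_neg {ε x : ℝ} (hε : ε ≠ 0) (hx : 1 < log x) :
    HasDerivAt (fun y => -ε⁻¹ * log (log y) ^ (-ε))
      (x * log x * log (log x) ^ (1 + ε))⁻¹ x := by
  have hx0 : x ≠ 0 := by rintro rfl; simp at hx; linarith
  have hll : 0 < log (log x) := log_pos hx
  have hd := (((hasDerivAt_log hx0).log (by linarith)).rpow_const (p := -ε)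
    (Or.inl hll.ne')).const_mul (-ε⁻¹)
  refine hd.congr_deriv ?_
  rw [show -ε - 1 = -(1 + ε) by ring, rpow_neg hll.le]
  field_simp

theorem summable_inv_mul_log_mul_log_log_rpow {ε : ℝ} (hε : 0 < ε) :
    Summable fun n : ℕ => ((n : ℝ) * log n * log (log n) ^ (1 + ε))⁻¹ := by
  have hpos : ∀ x : ℝ, 3 ≤ x → 0 < x * log x * log (log x) ^ (1 + ε) := fun x hx => by
    have := one_lt_log_of_three_le hx
    have := log_pos this
    have : (0 : ℝ) < x := by linarith
    positivity
  have hnonneg : ∀ x ∈ Set.Ioi ((3 : ℕ) : ℝ), 0 ≤ (x * log x * log (log x) ^ (1 + ε))⁻¹ :=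
    fun x hx => inv_nonneg.2 (hpos x (by simpa using hx.out.le)).le
  have hlim : Tendsto (fun y : ℝ => -ε⁻¹ * log (log y) ^ (-ε)) atTop (nhds 0) := by
    simpa using ((tendsto_rpow_neg_atTop hε).comp
      (tendsto_log_atTop.comp tendsto_log_atTop)).const_mul (-ε⁻¹)
  refine AntitoneOn.summable_of_integrableOn_Ioi (N := 3)
    (f := fun x => (x * log x * log (log x) ^ (1 + ε))⁻¹) ?_ ?_ hnonneg
  · intro x hx y hy hxy
    simp only [Nat.cast_ofNat, Set.mem_Ici] at hx hy
    have hlx := one_lt_log_of_three_le hx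
    have hllx := log_pos hlx
    have hlxy : log x ≤ log y := log_le_log (by linarith) hxy
    refine inv_anti₀ (hpos x hx) ?_
    gcongr
    exact mul_nonneg (by linarith) (by linarith)
  · exact MeasureTheory.integrableOn_Ioi_deriv_of_nonneg'
      (fun x hx => hasDerivAt_log_log_rpow_neg hε.ne' (one_lt_log_of_three_le (by simpa using hx)))
      hnonneg hlim

end Real

-- At `i = 0` this reads `-1 ≤ 0`, because `(0 : ℝ)⁻¹ = 0`.
theorem inv_sub_inv_add_one_le_inv_sq (i : ℕ) :
    (i : ℝ)⁻¹ - ((i : ℝ) + 1)⁻¹ ≤ ((i : ℝ) ^ 2)⁻¹ := by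
  rcases Nat.eq_zero_or_pos i with rfl | hi
  · norm_num
  · have hi' : (0 : ℝ) < i := by exact_mod_cast hi
    rw [inv_sub_inv hi'.ne' (by positivity), div_le_iff₀ (by positivity)]
    field_simp
    linarith

section

variable {A B : Set ℕ}

theorem cnt_eq_card_filter_range [DecidablePred (· ∈ A)] (x : ℕ) :
    cnt A x = ((Finset.range (x + 1)).filter (· ∈ A)).card := by
  rw [cnt, ← Set.ncard_coe_finset]
  congr 1
  ext a
  simp [and_comm]

theorem cnt_le_self (hA : A ⊆ {n | 0 < n}) (x : ℕ) : cnt A x ≤ x := by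
  calc cnt A x ≤ (Set.Icc 1 x).ncard :=
        Set.ncard_le_ncard (fun a ⟨ha, hax⟩ => ⟨hA ha, hax⟩) (Set.finite_Icc 1 x)
    _ = x := by simp

theorem sum_range_indicator_inv_le (hA : A ⊆ {n | 0 < n}) (n : ℕ) :
    ∑ i ∈ Finset.range n, A.indicator (fun a : ℕ => (a : ℝ)⁻¹) i ≤
      1 + ∑ i ∈ Finset.range n, (cnt A i : ℝ) / i ^ 2 := by
  classical
  rcases n with _ | m
  · simp
  have hcnt : ∀ k, ∑ i ∈ Finset.range (k + 1), A.indicator (1 : ℕ → ℝ) i = cnt A k := by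
    intro k
    simp [Set.indicator_apply, Finset.sum_boole, cnt_eq_card_filter_range]
  have hsplit : ∀ i, A.indicator (fun a : ℕ => (a : ℝ)⁻¹) i =
      (i : ℝ)⁻¹ * A.indicator (1 : ℕ → ℝ) i := by
    intro i
    by_cases h : i ∈ A <;> simp [h]
  have hparts :=
    Finset.sum_range_by_parts (fun i : ℕ => (i : ℝ)⁻¹) (A.indicator (1 : ℕ → ℝ)) (m + 1)
  simp only [smul_eq_mul, add_tsub_cancel_right, hcnt, ← hsplit] at hparts
  have hlast : (m : ℝ)⁻¹ * cnt A m ≤ 1 := by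
    rcases Nat.eq_zero_or_pos m with rfl | hm
    · simp
    · rw [inv_mul_le_one₀ (by exact_mod_cast hm)]
      exact_mod_cast cnt_le_self hA m
  have hterm : ∀ i, -(((i + 1 : ℕ) : ℝ)⁻¹ - (i : ℝ)⁻¹) * cnt A i ≤ (cnt A i : ℝ) / i ^ 2 := by
    intro i
    rw [div_eq_mul_inv, mul_comm (cnt A i : ℝ)]
    push_cast
    exact mul_le_mul_of_nonneg_right (by linarith [inv_sub_inv_add_one_le_inv_sq i])
      (Nat.cast_nonneg _)
  calc ∑ i ∈ Finset.range (m + 1), A.indicator (fun a : ℕ => (a : ℝ)⁻¹) i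
      = (m : ℝ)⁻¹ * cnt A m +
          ∑ i ∈ Finset.range m, -(((i + 1 : ℕ) : ℝ)⁻¹ - (i : ℝ)⁻¹) * cnt A i := by
        rw [hparts, sub_eq_add_neg, ← Finset.sum_neg_distrib]
        simp only [neg_mul]
    _ ≤ 1 + ∑ i ∈ Finset.range m, (cnt A i : ℝ) / i ^ 2 :=
        add_le_add hlast (Finset.sum_le_sum fun i _ => hterm i)
    _ ≤ 1 + ∑ i ∈ Finset.range (m + 1), (cnt A i : ℝ) / i ^ 2 :=
        add_le_add le_rfl <| Finset.sum_le_sum_of_subset_of_nonneg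
          (Finset.range_subset_range.2 m.le_succ) fun _ _ _ => by positivity

theorem summable_indicator_inv_of_isBigO {ε : ℝ} (hε : 0 < ε) (hA : A ⊆ {n | 0 < n})
    (hAO : (fun x : ℕ => (cnt A x : ℝ)) =O[atTop]
      (fun x : ℕ => (x : ℝ) / (Real.log x * Real.log (Real.log x) ^ (1 + ε)))) :
    Summable (A.indicator fun a : ℕ => (a : ℝ)⁻¹) := by
  have hcnt : Summable fun t : ℕ => (cnt A t : ℝ) / t ^ 2 := by
    refine summable_of_isBigO_nat (Real.summable_inv_mul_log_mul_log_log_rpow hε) ?_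
    refine ((hAO.mul (Asymptotics.isBigO_refl (fun t : ℕ => ((t : ℝ) ^ 2)⁻¹) atTop)).congr
      (fun t => ?_) (fun t => ?_))
    · rw [div_eq_mul_inv]
    · rcases Nat.eq_zero_or_pos t with rfl | ht
      · simp
      · have : (t : ℝ) ≠ 0 := by exact_mod_cast ht.ne'
        field_simp
  refine summable_of_sum_range_le (c := 1 + ∑' t, (cnt A t : ℝ) / t ^ 2)
    (Set.indicator_nonneg fun _ _ => by positivity) fun n => ?_
  exact (sum_range_indicator_inv_le hA n).trans
    (add_le_add le_rfl (hcnt.sum_le_tsum _ fun _ _ => by positivity))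

theorem MC2.le_sum_cnt_div [DecidablePred (· ∈ A)] (h : MC2 A B) (x : ℕ) :
    x ≤ ∑ a ∈ (Finset.range (x + 1)).filter (· ∈ A), cnt B (x / a) := by
  classical
  obtain ⟨hA, hB, hAB⟩ := h
  have hcover : Finset.Icc 1 x ⊆ ((Finset.range (x + 1)).filter (· ∈ A)).biUnion
      fun a => ((Finset.range (x / a + 1)).filter (· ∈ B)).image (a * ·) := by
    intro n hn
    obtain ⟨hn1, hnx⟩ := Finset.mem_Icc.1 hn
    obtain ⟨a, ha, b, hb, rfl⟩ := hAB n hn1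
    have hax : a ≤ x := (Nat.le_mul_of_pos_right a (hB hb)).trans hnx
    have hbx : b ≤ x / a := (Nat.le_div_iff_mul_le (hA ha)).2 (by rwa [mul_comm])
    simp only [Finset.mem_biUnion, Finset.mem_filter, Finset.mem_range, Finset.mem_image]
    exact ⟨a, ⟨by omega, ha⟩, b, ⟨by omega, hb⟩, rfl⟩
  calc x = (Finset.Icc 1 x).card := by simp
    _ ≤ _ := Finset.card_le_card hcover
    _ ≤ _ := Finset.card_biUnion_le
    _ ≤ _ := Finset.sum_le_sum fun a _ => by
      rw [cnt_eq_card_filter_range]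
      exact Finset.card_image_le

theorem tendsto_cnt_div_div_atTop
    (hB : (fun x : ℕ => (cnt B x : ℝ)) =o[atTop] (fun x : ℕ => (x : ℝ))) {a : ℕ} (ha : 0 < a) :
    Tendsto (fun x : ℕ => (cnt B (x / a) : ℝ) / x) atTop (nhds 0) := by
  have hdiv : (fun x : ℕ => ((x / a : ℕ) : ℝ)) =O[atTop] (fun x : ℕ => (x : ℝ)) :=
    Asymptotics.IsBigO.of_bound 1 <| Eventually.of_forall fun x => by
      simpa using (Nat.cast_le (α := ℝ)).2 (Nat.div_le_self x a)
  exact ((hB.comp_tendsto (Nat.tendsto_div_const_atTop ha.ne')).trans_isBigO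
    hdiv).tendsto_div_nhds_zero

theorem not_MC2_of_summable_of_isLittleO (hA : Summable (A.indicator fun a : ℕ => (a : ℝ)⁻¹))
    (hB : (fun x : ℕ => (cnt B x : ℝ)) =o[atTop] (fun x : ℕ => (x : ℝ))) : ¬ MC2 A B := by
  classical
  intro h
  set w : ℕ → ℕ → ℝ := fun x => A.indicator fun a => (cnt B (x / a) : ℝ) / x with hw
  have hw_nonneg : ∀ x a, 0 ≤ w x a := fun x a =>
    Set.indicator_nonneg (fun _ _ => by positivity) a
  have hw_le : ∀ x a, w x a ≤ A.indicator (fun a : ℕ => (a : ℝ)⁻¹) a := by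
    intro x a
    by_cases ha : a ∈ A
    · simp only [hw, Set.indicator_of_mem ha]
      rcases Nat.eq_zero_or_pos x with rfl | hx
      · simp
      calc (cnt B (x / a) : ℝ) / x ≤ ((x / a : ℕ) : ℝ) / x := by
            gcongr; exact_mod_cast cnt_le_self h.2.1 _
        _ ≤ ((x : ℝ) / a) / x := by gcongr; exact Nat.cast_div_le
        _ = (a : ℝ)⁻¹ := by field_simp
    · simp [hw, ha]
  have hlim : Tendsto (fun x => ∑' a, w x a) atTop (nhds 0) := by
    have := tendsto_tsum_of_dominated_convergence (f := w) (𝓕 := atTop) (g := fun _ => 0) hA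
      (fun a => ?_) (Eventually.of_forall fun x a => ?_)
    · simpa using this
    · by_cases ha : a ∈ A
      · simpa [hw, ha] using tendsto_cnt_div_div_atTop hB (h.1 ha)
      · simp [hw, ha]
    · rw [Real.norm_of_nonneg (hw_nonneg x a)]
      exact hw_le x a
  have hone : ∀ x ≥ 1, 1 ≤ ∑' a, w x a := by
    intro x hx
    have hx0 : (0 : ℝ) < x := by exact_mod_cast hx
    set F := (Finset.range (x + 1)).filter (· ∈ A)
    calc (1 : ℝ) = x / x := (div_self hx0.ne').symm
      _ ≤ (∑ a ∈ F, (cnt B (x / a) : ℝ)) / x := by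
          gcongr; exact_mod_cast h.le_sum_cnt_div x
      _ = ∑ a ∈ F, w x a := by
          rw [Finset.sum_div]
          refine Finset.sum_congr rfl fun a ha => ?_
          simp [hw, (Finset.mem_filter.1 ha).2]
      _ ≤ ∑' a, w x a := (hA.of_nonneg_of_le (hw_nonneg x) (hw_le x)).sum_le_tsum F
          fun a _ => hw_nonneg x a
  obtain ⟨x, hx, hx1⟩ := ((hlim.eventually (gt_mem_nhds one_pos)).and
    (eventually_ge_atTop 1)).exists
  linarith [hone x hx1]

end

theorem stmt_7 (ε : ℝ) (hε : 0 < ε) :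
    ¬ ∃ A B : Set ℕ, MC2 A B ∧ A.Infinite ∧ B.Infinite ∧
        (fun x : ℕ => (cnt B x : ℝ)) =o[Filter.atTop] (fun x : ℕ => (x : ℝ)) ∧
        (fun x : ℕ => (cnt A x : ℝ)) =O[Filter.atTop]
          (fun x : ℕ => (x : ℝ) / (Real.log x * Real.log (Real.log x) ^ (1 + ε))) := by
  rintro ⟨A, B, hAB, -, -, hB, hA⟩
  exact not_MC2_of_summable_of_isLittleO (summable_indicator_inv_of_isBigO hε hAB.1 hA) hB hAB
end

section
/- Let Q be a set of prime numbers such that ∑_{q ∈ Q} 1/q = ∞, and let A = { n ∈ ℤ⁺ : n is squarefree and every prime divisor of n lies in Q }. Then there exists a set B of positive integers such that (A,B) ∈ MC₂ and B(x) = o(x). -/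
/-!
Take `B` to be the positive integers `b` such that every `q ∈ Q` dividing `b` divides it at
least twice. Every `n` is `a * b` with `a` the product of the primes `q ∈ Q` dividing `n` exactly
once. For finite `S ⊆ Q` the condition restricted to `S` is periodic modulo `∏ q²` and, by the
Chinese remainder theorem, has density `∏ (1 - 1/q + 1/q²) ≤ exp (-½ ∑ 1/q)`, which is
arbitrarily small because `∑ 1/q` diverges over `Q`.
-/

open Filter

open Finset Function

theorem Nat.count_and_of_coprime {m n : ℕ} (hmn : m.Coprime n) {P R : ℕ → Prop}
    [DecidablePred P] [DecidablePred R] (hP : Periodic P m) (hR : Periodic R n) :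
    Nat.count (fun r => P r ∧ R r) (m * n) = Nat.count P m * Nat.count R n := by
  rcases m.eq_zero_or_pos with rfl | hm
  · simp
  rcases n.eq_zero_or_pos with rfl | hn
  · simp
  simp only [Nat.count_eq_card_filter_range, ← card_product]
  refine card_nbij' (fun r => (r % m, r % n)) (fun ab => Nat.chineseRemainder hmn ab.1 ab.2)
    ?_ ?_ ?_ ?_
  · intro r hr
    simp only [coe_filter, mem_range, Set.mem_ofPred_eq, coe_product, Set.mem_prod] at hr ⊢
    exact ⟨⟨Nat.mod_lt r hm, (hP.map_mod_nat r).symm ▸ hr.2.1⟩,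
      ⟨Nat.mod_lt r hn, (hR.map_mod_nat r).symm ▸ hr.2.2⟩⟩
  · rintro ⟨a, b⟩ hab
    simp only [coe_filter, mem_range, Set.mem_ofPred_eq, coe_product, Set.mem_prod] at hab ⊢
    obtain ⟨ha, hb⟩ := (Nat.chineseRemainder hmn a b).2
    refine ⟨Nat.chineseRemainder_lt_mul hmn a b hm.ne' hn.ne', ?_, ?_⟩
    · rw [← hP.map_mod_nat, ha, Nat.mod_eq_of_lt hab.1.1]; exact hab.1.2
    · rw [← hR.map_mod_nat, hb, Nat.mod_eq_of_lt hab.2.1]; exact hab.2.2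
  · intro r hr
    simp only [coe_filter, mem_range, Set.mem_ofPred_eq] at hr
    have hr' := Nat.chineseRemainder_modEq_unique hmn (Nat.mod_modEq r m).symm
      (Nat.mod_modEq r n).symm
    exact (hr'.eq_of_lt_of_lt hr.1 (Nat.chineseRemainder_lt_mul hmn _ _ hm.ne' hn.ne')).symm
  · rintro ⟨a, b⟩ hab
    simp only [coe_filter, mem_range, Set.mem_ofPred_eq, coe_product, Set.mem_prod] at hab
    obtain ⟨ha, hb⟩ := (Nat.chineseRemainder hmn a b).2
    simp only [Prod.mk.injEq]
    exact ⟨Eq.trans ha (Nat.mod_eq_of_lt hab.1.1), Eq.trans hb (Nat.mod_eq_of_lt hab.2.1)⟩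

theorem Nat.count_mul_of_periodic {P : ℕ → Prop} [DecidablePred P] {M : ℕ} (hP : Periodic P M)
    (k : ℕ) : Nat.count P (k * M) = k * Nat.count P M := by
  induction k with
  | zero => simp
  | succ k ih =>
    have hshift (j : ℕ) : P (k * M + j) ↔ P j := by
      simpa [add_comm] using Iff.of_eq (hP.nat_mul k j)
    rw [add_one_mul, Nat.count_add, ih, add_one_mul]
    simp only [hshift]

theorem Nat.count_succ_le_of_periodic {P : ℕ → Prop} [DecidablePred P] {M : ℕ}
    (hP : Periodic P M) (hM : 0 < M) (x : ℕ) :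
    Nat.count P (x + 1) ≤ (x / M + 1) * Nat.count P M := by
  rw [← Nat.count_mul_of_periodic hP]
  refine Nat.count_monotone P ?_
  have := Nat.lt_div_mul_add (a := x) hM
  rw [add_one_mul]
  omega

theorem cnt_le_count {B : Set ℕ} {P : ℕ → Prop} [DecidablePred P] (hBP : ∀ b ∈ B, P b)
    (x : ℕ) : cnt B x ≤ Nat.count P (x + 1) := by
  rw [cnt, Nat.count_eq_card_filter_range, ← Set.ncard_coe_finset]
  refine Set.ncard_le_ncard (fun b hb => ?_) (finite_toSet _)
  simpa [Nat.lt_succ_iff] using ⟨hb.2, hBP b hb.1⟩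

open Classical in
theorem isLittleO_cnt_of_periodic {B : Set ℕ}
    (h : ∀ ε > 0, ∃ (P : ℕ → Prop) (M : ℕ), 0 < M ∧ Periodic P M ∧ (∀ b ∈ B, P b) ∧
      (Nat.count P M : ℝ) ≤ ε * M) :
    (fun x : ℕ => (cnt B x : ℝ)) =o[atTop] (fun x : ℕ => (x : ℝ)) := by
  refine Asymptotics.isLittleO_iff.2 fun c hc => ?_
  obtain ⟨P, M, hM, hP, hBP, hdens⟩ := h (c / 2) (half_pos hc)
  set G := Nat.count P M
  have hbound (x : ℕ) : (cnt B x : ℝ) ≤ c / 2 * x + G := by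
    have hcnt := (cnt_le_count hBP x).trans (Nat.count_succ_le_of_periodic hP hM x)
    calc (cnt B x : ℝ) ≤ ((x / M : ℕ) + 1) * G := by exact_mod_cast hcnt
      _ ≤ (x / M) * G + G := by rw [add_one_mul]; gcongr; exact Nat.cast_div_le
      _ ≤ (x / M) * (c / 2 * M) + G := by gcongr
      _ = c / 2 * x + G := by field_simp
  filter_upwards [eventually_ge_atTop ⌈2 * G / c⌉₊] with x hx
  have hGx : 2 * G / c ≤ x := Nat.ceil_le.1 hx
  rw [div_le_iff₀ hc] at hGx
  rw [Real.norm_natCast, Real.norm_natCast]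
  linarith [hbound x]

def PowerfulAt (S : Set ℕ) (b : ℕ) : Prop := ∀ q ∈ S, q ∣ b → q ^ 2 ∣ b

theorem PowerfulAt.mono {S T : Set ℕ} {b : ℕ} (hST : S ⊆ T) (hb : PowerfulAt T b) :
    PowerfulAt S b :=
  fun q hq => hb q (hST hq)

theorem powerfulAt_insert (p : ℕ) (S : Set ℕ) :
    PowerfulAt (insert p S) = fun b => PowerfulAt {p} b ∧ PowerfulAt S b := by
  funext b
  simp [PowerfulAt]

theorem periodic_powerfulAt {S : Set ℕ} {M : ℕ} (hM : ∀ q ∈ S, q ^ 2 ∣ M) :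
    Periodic (PowerfulAt S) M := by
  intro b
  refine propext (forall₂_congr fun q hq => ?_)
  rw [Nat.dvd_add_left (hM q hq), Nat.dvd_add_left ((dvd_pow_self q two_ne_zero).trans (hM q hq))]

open Classical in
theorem count_powerfulAt_prime {p : ℕ} (hp : p.Prime) :
    Nat.count (PowerfulAt {p}) (p ^ 2) = p ^ 2 - p + 1 := by
  have hgood : {r ∈ range (p ^ 2) | PowerfulAt {p} r} =
      insert 0 {r ∈ range (p ^ 2) | (p ^ 2).Coprime r} := by
    ext r
    simp only [mem_filter, mem_range, mem_insert, PowerfulAt, Set.mem_singleton_iff, forall_eq,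
      Nat.coprime_pow_left_iff two_pos, hp.coprime_iff_not_dvd]
    constructor
    · rintro ⟨hr, hgood⟩
      by_cases hpr : p ∣ r
      · exact .inl (Nat.eq_zero_of_dvd_of_lt (hgood hpr) hr)
      · exact .inr ⟨hr, hpr⟩
    · rintro (rfl | ⟨hr, hpr⟩)
      · exact ⟨pow_pos hp.pos 2, fun _ => dvd_zero _⟩
      · exact ⟨hr, fun h => absurd h hpr⟩
  have h0 : 0 ∉ {r ∈ range (p ^ 2) | (p ^ 2).Coprime r} := by
    simp [hp.ne_one]
  rw [Nat.count_eq_card_filter_range, hgood, card_insert_of_notMem h0, ← Nat.totient,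
    Nat.totient_prime_pow hp two_pos, show 2 - 1 = 1 from rfl, pow_one, Nat.mul_sub_one, ← sq]

open Classical in
theorem count_powerfulAt {S : Finset ℕ} (hS : ∀ q ∈ S, q.Prime) :
    Nat.count (PowerfulAt S) (∏ q ∈ S, q ^ 2) = ∏ q ∈ S, (q ^ 2 - q + 1) := by
  induction S using Finset.induction_on with
  | empty => simp [Nat.count_one, PowerfulAt]
  | @insert p s hps ih =>
    have hp := hS p (mem_insert_self p s)
    have hs (q) (hq : q ∈ s) : q.Prime := hS q (mem_insert_of_mem hq)
    have hcop : (p ^ 2).Coprime (∏ q ∈ s, q ^ 2) := Nat.Coprime.prod_right fun q hq =>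
      ((Nat.coprime_primes hp (hs q hq)).2 fun h => hps (h ▸ hq)).pow 2 2
    rw [prod_insert hps, prod_insert hps, coe_insert, ← ih hs, ← count_powerfulAt_prime hp]
    convert Nat.count_and_of_coprime hcop
      (periodic_powerfulAt (S := {p}) fun q (hq : q = p) => hq ▸ dvd_rfl)
      (periodic_powerfulAt fun q hq => dvd_prod_of_mem _ hq) using 2
    exact powerfulAt_insert p s

theorem sq_sub_add_one_le_exp {q : ℕ} (hq : 2 ≤ q) :
    ((q ^ 2 - q + 1 : ℕ) : ℝ) ≤ Real.exp (-(1 / (q : ℝ)) / 2) * (q : ℝ) ^ 2 := by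
  have hq' : (2 : ℝ) ≤ q := by exact_mod_cast hq
  calc ((q ^ 2 - q + 1 : ℕ) : ℝ) = (q : ℝ) ^ 2 - q + 1 := by
        rw [Nat.cast_add, Nat.cast_sub (Nat.le_self_pow two_ne_zero q)]; push_cast; ring
    _ ≤ (1 + -(1 / (q : ℝ)) / 2) * (q : ℝ) ^ 2 := by
        field_simp
        nlinarith
    _ ≤ Real.exp (-(1 / (q : ℝ)) / 2) * (q : ℝ) ^ 2 := by
        gcongr
        linarith [Real.add_one_le_exp (-(1 / (q : ℝ)) / 2)]

open Classical in
theorem count_powerfulAt_le_exp {S : Finset ℕ} (hS : ∀ q ∈ S, q.Prime) :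
    (Nat.count (PowerfulAt S) (∏ q ∈ S, q ^ 2) : ℝ) ≤
      Real.exp (-(∑ q ∈ S, 1 / (q : ℝ)) / 2) * ∏ q ∈ S, (q : ℝ) ^ 2 := by
  rw [count_powerfulAt hS, Nat.cast_prod, ← sum_neg_distrib, sum_div, Real.exp_sum,
    ← prod_mul_distrib]
  exact prod_le_prod (fun q _ => Nat.cast_nonneg _)
    fun q hq => sq_sub_add_one_le_exp (hS q hq).two_le

theorem exists_squarefree_mul_powerfulAt {Q : Set ℕ} (hQ : ∀ q ∈ Q, q.Prime) {n : ℕ}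
    (hn : n ≠ 0) :
    ∃ a b, Squarefree a ∧ (∀ p, p.Prime → p ∣ a → p ∈ Q) ∧ PowerfulAt Q b ∧ n = a * b := by
  classical
  set T := {p ∈ n.primeFactors | p ∈ Q ∧ ¬p ^ 2 ∣ n}
  have hT (p) (hp : p ∈ T) : p.Prime := Nat.prime_of_mem_primeFactors (mem_filter.1 hp).1
  have hdvd_iff (p) (hp : p.Prime) : p ∣ ∏ q ∈ T, q ↔ p ∈ T := by
    conv_rhs => rw [← Nat.primeFactors_prod hT]
    rw [Nat.mem_primeFactors_of_ne_zero (prod_ne_zero_iff.2 fun q hq => (hT q hq).ne_zero)]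
    exact (and_iff_right hp).symm
  obtain ⟨b, hab⟩ : ∏ q ∈ T, q ∣ n :=
    (prod_dvd_prod_of_subset _ _ _ (filter_subset _ _)).trans n.prod_primeFactors_dvd
  refine ⟨∏ q ∈ T, q, b, ?_, fun p hp hpa => (mem_filter.1 ((hdvd_iff p hp).1 hpa)).2.1,
    fun q hq hqb => ?_, hab⟩
  · refine squarefree_prod_of_pairwise_isCoprime (fun p hp q hq hpq => ?_)
      fun p hp => (hT p hp).squarefree
    exact Nat.coprime_iff_isRelPrime.1 ((Nat.coprime_primes (hT p hp) (hT q hq)).2 hpq)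
  have hq' := hQ q hq
  have hqa : ¬q ∣ ∏ q ∈ T, q := fun hqa =>
    (mem_filter.1 ((hdvd_iff q hq').1 hqa)).2.2 (hab ▸ sq q ▸ mul_dvd_mul hqa hqb)
  have hqn : q ^ 2 ∣ n := by
    by_contra hqn
    refine hqa ((hdvd_iff q hq').2 (mem_filter.2 ⟨?_, hq, hqn⟩))
    exact Nat.mem_primeFactors.2 ⟨hq', hab ▸ dvd_mul_of_dvd_right hqb _, hn⟩
  rw [hab] at hqn
  exact ((hq'.coprime_iff_not_dvd.2 hqa).pow_left 2).dvd_of_dvd_mul_left hqn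

theorem exists_lt_sum_of_not_summable {ι : Type*} {f : ι → ℝ} (hf : 0 ≤ f) (h : ¬Summable f)
    (C : ℝ) : ∃ u : Finset ι, C < ∑ i ∈ u, f i := by
  by_contra! hC
  exact h (summable_of_sum_le hf hC)

theorem stmt_12 (Q : Set ℕ) (hQ : ∀ q ∈ Q, Nat.Prime q)
    (hdiv : ¬ Summable (fun q : Q => (1 : ℝ) / ((q : ℕ) : ℝ)))
    (A : Set ℕ)
    (hA : A = {n : ℕ | 0 < n ∧ Squarefree n ∧ ∀ p : ℕ, p.Prime → p ∣ n → p ∈ Q}) :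
    ∃ B : Set ℕ, MC2 A B ∧
      (fun x : ℕ => (cnt B x : ℝ)) =o[Filter.atTop] (fun x : ℕ => (x : ℝ)) := by
  subst hA
  refine ⟨{b | 0 < b ∧ PowerfulAt Q b}, ⟨fun n hn => hn.1, fun b hb => hb.1, fun n hn => ?_⟩,
    isLittleO_cnt_of_periodic fun ε hε => ?_⟩
  · obtain ⟨a, b, ha, haQ, hb, rfl⟩ := exists_squarefree_mul_powerfulAt hQ hn.ne'
    exact ⟨a, ⟨Nat.pos_of_mul_pos_right hn, ha, haQ⟩, b, ⟨Nat.pos_of_mul_pos_left hn, hb⟩, rfl⟩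
  obtain ⟨u, hu⟩ := exists_lt_sum_of_not_summable (fun _ => by positivity) hdiv (-2 * Real.log ε)
  set S := u.map (Embedding.subtype (· ∈ Q))
  have hSQ : (S : Set ℕ) ⊆ Q := fun q hq => by
    obtain ⟨q, -, rfl⟩ := mem_map.1 hq
    exact q.2
  have hS (q) (hq : q ∈ S) : q.Prime := hQ q (hSQ hq)
  refine ⟨PowerfulAt S, ∏ q ∈ S, q ^ 2, prod_pos fun q hq => pow_pos (hS q hq).pos 2,
    periodic_powerfulAt fun q hq => dvd_prod_of_mem _ hq, fun b hb => hb.2.mono hSQ, ?_⟩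
  calc _ ≤ Real.exp (-(∑ q ∈ S, 1 / (q : ℝ)) / 2) * ∏ q ∈ S, (q : ℝ) ^ 2 :=
        count_powerfulAt_le_exp hS
    _ ≤ ε * ((∏ q ∈ S, q ^ 2 : ℕ) : ℝ) := by
        rw [Nat.cast_prod]
        push_cast
        gcongr
        rw [← Real.exp_log hε, sum_map]
        exact Real.exp_le_exp.2 (by simp only [Embedding.subtype_apply]; linarith)
end
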